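/- arXiv:2402.16214 — 3 statements merged into one kernel-verified Lean document; each statement's English description precedes it below -/
import Mathlib

section
/- Let f be a homogeneous polynomial written as f = g_1 + ··· + g_r where the g_i share no order types pairwise. Suppose g ∈ (f)_{S_d} is homogeneous with deg(g) = deg(f), g shares order types only with g_1 among the g_i, and g(𝟏) ≠ 0. Then g_i(𝟏) = 0 for all i ≠ 1, and hence f(𝟏) = g_1(𝟏). -/
open MvPolynomial

def symOrbit {k : Type*} [CommSemiring k] {d : ℕ} (f : MvPolynomial (Fin d) k) :
    Set (MvPolynomial (Fin d) k) :=
  Set.range (fun σ : Equiv.Perm (Fin d) => rename σ f)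

noncomputable def psi {k : Type*} [CommSemiring k] {d : ℕ} (f : MvPolynomial (Fin d) k) :
    Ideal (MvPolynomial (Fin d) k) :=
  Ideal.span (symOrbit f)

def orderType {d : ℕ} (s : Fin d →₀ ℕ) : Multiset ℕ :=
  Multiset.map (s : Fin d → ℕ) Finset.univ.val

/-- Two polynomials share an order type if some monomial of one has the same order type
as some monomial of the other. -/
def sharesOrderType {k : Type*} [CommSemiring k] {d : ℕ}
    (f g : MvPolynomial (Fin d) k) : Prop :=
  ∃ m ∈ f.support, ∃ m' ∈ g.support, orderType m = orderType m'

/-!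
For a set `S` of order types, summing the coefficients of the monomials whose order type lies
in `S` is a linear functional on `k[x_1, …, x_d]` that is invariant under permuting the
variables. As `g` is homogeneous of the degree of `f`, it is a `k`-linear combination
`∑ a_σ σ·f`, so each such functional takes the value `(∑ a_σ) · (its value on f)` at `g`.
For `S` the set of all order types the functional is evaluation at `𝟏`, whence `∑ a_σ ≠ 0`.
For `S` the order types of `g_i`, `i ≠ 0`, it vanishes on `g` and sends `f` to `g_i(𝟏)`.
-/

section

variable {k : Type*} [CommSemiring k]

theorem homogeneousComponent_mul_of_isHomogeneous {σ : Type*} {n : ℕ} (c : MvPolynomial σ k)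
    {p : MvPolynomial σ k} (hp : p.IsHomogeneous n) :
    homogeneousComponent n (c * p) = C (coeff 0 c) * p := by
  conv_lhs => rw [← sum_homogeneousComponent c]
  rw [Finset.sum_mul, map_sum, Finset.sum_eq_single 0]
  · rw [homogeneousComponent_zero, homogeneousComponent_C_mul, homogeneousComponent_eq_self hp]
  · intro j _ hj
    rw [homogeneousComponent_of_mem ((homogeneousComponent_isHomogeneous j c).mul hp), if_neg]
    omega
  · simp

variable {d : ℕ}

theorem exists_eq_sum_smul_rename_of_mem_psi {n : ℕ} {f g : MvPolynomial (Fin d) k}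
    (hf : f.IsHomogeneous n) (hg : g ∈ psi f) (hgn : g.IsHomogeneous n) :
    ∃ a : Equiv.Perm (Fin d) → k, g = ∑ e, a e • rename e f := by
  obtain ⟨c, rfl⟩ := (Submodule.mem_span_range_iff_exists_fun _).mp hg
  refine ⟨fun e => coeff 0 (c e), ?_⟩
  rw [← homogeneousComponent_eq_self hgn, map_sum]
  simp only [smul_eq_mul, homogeneousComponent_mul_of_isHomogeneous _ hf.rename_isHomogeneous,
    smul_eq_C_mul]

theorem orderType_mapDomain_perm (e : Equiv.Perm (Fin d)) (m : Fin d →₀ ℕ) :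
    orderType (Finsupp.mapDomain e m) = orderType m := by
  have h : ⇑(Finsupp.equivMapDomain e m) = m ∘ e.symm :=
    funext fun _ => Finsupp.equivMapDomain_apply _ _ _
  rw [← Finsupp.equivMapDomain_eq_mapDomain, orderType, orderType, h, ← Multiset.map_map,
    Multiset.map_univ_val_equiv]

def orderTypes (p : MvPolynomial (Fin d) k) : Set (Multiset ℕ) :=
  orderType '' (p.support : Set (Fin d →₀ ℕ))

noncomputable def orderTypeSum (S : Set (Multiset ℕ)) : MvPolynomial (Fin d) k →ₗ[k] k :=
  Finsupp.linearCombination k (fun m => S.indicator 1 (orderType m)) ∘ₗ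
    (AddMonoidAlgebra.coeffLinearEquiv k).toLinearMap

theorem orderTypeSum_apply (S : Set (Multiset ℕ)) (p : MvPolynomial (Fin d) k) :
    orderTypeSum S p = ∑ m ∈ p.support, S.indicator 1 (orderType m) * coeff m p :=
  Finset.sum_congr rfl fun _ _ => mul_comm _ _

theorem orderTypeSum_rename (S : Set (Multiset ℕ)) (e : Equiv.Perm (Fin d))
    (p : MvPolynomial (Fin d) k) : orderTypeSum S (rename e p) = orderTypeSum S p := by
  classical
  rw [orderTypeSum_apply, orderTypeSum_apply, support_rename_of_injective e.injective,
    Finset.sum_image fun _ _ _ _ h => Finsupp.mapDomain_injective e.injective h]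
  simp only [orderType_mapDomain_perm, coeff_rename_mapDomain _ e.injective]

theorem orderTypeSum_of_forall_mem {S : Set (Multiset ℕ)} {p : MvPolynomial (Fin d) k}
    (h : ∀ m ∈ p.support, orderType m ∈ S) :
    orderTypeSum S p = eval (fun _ => 1) p := by
  rw [orderTypeSum_apply, eval_eq]
  refine Finset.sum_congr rfl fun m hm => ?_
  simp [Set.indicator_of_mem (h m hm)]

theorem orderTypeSum_of_forall_notMem {S : Set (Multiset ℕ)} {p : MvPolynomial (Fin d) k}
    (h : ∀ m ∈ p.support, orderType m ∉ S) : orderTypeSum S p = 0 :=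
  (orderTypeSum_apply S p).trans <| Finset.sum_eq_zero fun m hm => by
    simp [Set.indicator_of_notMem (h m hm)]

theorem orderTypeSum_univ (p : MvPolynomial (Fin d) k) :
    orderTypeSum Set.univ p = eval (fun _ => 1) p :=
  orderTypeSum_of_forall_mem fun _ _ => Set.mem_univ _

theorem orderTypeSum_orderTypes_self (p : MvPolynomial (Fin d) k) :
    orderTypeSum (orderTypes p) p = eval (fun _ => 1) p :=
  orderTypeSum_of_forall_mem fun _ hm => Set.mem_image_of_mem orderType hm

theorem orderTypeSum_orderTypes_eq_zero {p q : MvPolynomial (Fin d) k}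
    (h : ¬ sharesOrderType p q) : orderTypeSum (orderTypes q) p = 0 :=
  orderTypeSum_of_forall_notMem fun m hm ⟨m', hm', hmm'⟩ => h ⟨m, hm, m', hm', hmm'.symm⟩

theorem orderTypeSum_orderTypes_sum {ι : Type*} [Fintype ι]
    (gs : ι → MvPolynomial (Fin d) k) (hdisj : ∀ i j, i ≠ j → ¬ sharesOrderType (gs i) (gs j))
    (i : ι) : orderTypeSum (orderTypes (gs i)) (∑ j, gs j) = eval (fun _ => 1) (gs i) := by
  rw [map_sum, Fintype.sum_eq_single i fun j hj =>
    orderTypeSum_orderTypes_eq_zero (hdisj j i hj), orderTypeSum_orderTypes_self]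

theorem orderTypeSum_of_eq_sum_smul_rename (S : Set (Multiset ℕ)) {f g : MvPolynomial (Fin d) k}
    {a : Equiv.Perm (Fin d) → k} (hg : g = ∑ e, a e • rename e f) :
    orderTypeSum S g = (∑ e, a e) * orderTypeSum S f := by
  simp only [hg, map_sum, map_smul, orderTypeSum_rename, smul_eq_mul, Finset.sum_mul]

end

theorem zero_components_general {k : Type*} [Field k] {d r : ℕ} {n : ℕ}
    (gs : Fin (r + 1) → MvPolynomial (Fin d) k)
    (f : MvPolynomial (Fin d) k) (hf : f = ∑ i, gs i)
    (hfhom : f.IsHomogeneous n)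
    (hdisj : ∀ i j, i ≠ j → ¬ sharesOrderType (gs i) (gs j))
    (g : MvPolynomial (Fin d) k) (hg : g ∈ psi f) (hghom : g.IsHomogeneous n)
    (honly : ∀ i, i ≠ 0 → ¬ sharesOrderType g (gs i))
    (hg1 : eval (fun _ => (1 : k)) g ≠ 0) :
    (∀ i, i ≠ 0 → eval (fun _ => (1 : k)) (gs i) = 0) ∧
      eval (fun _ => (1 : k)) f = eval (fun _ => (1 : k)) (gs 0) := by
  obtain ⟨a, hga⟩ := exists_eq_sum_smul_rename_of_mem_psi hfhom hg hghom
  have hscale (S : Set (Multiset ℕ)) := orderTypeSum_of_eq_sum_smul_rename S hga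
  have ha : ∑ e, a e ≠ 0 := by
    refine left_ne_zero_of_mul (b := orderTypeSum Set.univ f) ?_
    rwa [← hscale, orderTypeSum_univ]
  have hcomponents : ∀ i, i ≠ 0 → eval (fun _ => (1 : k)) (gs i) = 0 := by
    intro i hi
    have h := hscale (orderTypes (gs i))
    rw [orderTypeSum_orderTypes_eq_zero (honly i hi), hf,
      orderTypeSum_orderTypes_sum gs hdisj] at h
    exact (mul_eq_zero.mp h.symm).resolve_left ha
  refine ⟨hcomponents, ?_⟩
  rw [hf, map_sum, Fintype.sum_eq_single 0 hcomponents]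

theorem zero_components {k : Type*} [Field k] {d r : ℕ} {n : ℕ}
    (gs : Fin (r + 1) → MvPolynomial (Fin d) k)
    (f : MvPolynomial (Fin d) k) (hf : f = ∑ i, gs i)
    (hfhom : f.IsHomogeneous n)
    (hdisj : ∀ i j, i ≠ j → ¬ sharesOrderType (gs i) (gs j))
    (g : MvPolynomial (Fin d) k) (hg : g ∈ psi f) (hghom : g.IsHomogeneous n)
    (honly : ∀ i, i ≠ 0 → ¬ sharesOrderType g (gs i))
    (hshare : sharesOrderType g (gs 0))
    (hg1 : eval (fun _ => (1 : k)) g ≠ 0) :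
    (∀ i, i ≠ 0 → eval (fun _ => (1 : k)) (gs i) = 0) ∧
      eval (fun _ => (1 : k)) f = eval (fun _ => (1 : k)) (gs 0) :=
  zero_components_general gs f hf hfhom hdisj g hg hghom honly hg1
end

section
/- Let I be a homogeneous ideal of k[x_1,...,x_d] generated in degree n. If there exist homogeneous polynomials g_1, g_2 ∈ I of degree n that share no order types and satisfy g_1(𝟏) ≠ 0 and g_2(𝟏) ≠ 0, then I is not a principal symmetric ideal. -/
open MvPolynomial

/-!
If `I = (f)_{S_d}` with `f` homogeneous, then `f ∈ I` forces `deg f ≥ n`, so every element of `I`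
of degree `n` is a `k`-linear combination of the permuted polynomials `σ f`. The linear,
`S_d`-invariant map collecting coefficients by order type therefore sends `g₁` and `g₂` to scalar
multiples of one vector. Both multiples are nonzero, since their coefficient sums are
`g₁(𝟏), g₂(𝟏) ≠ 0`, so they have a common support point: an order type shared by `g₁` and `g₂`.
-/

namespace MvPolynomial

variable {σ R : Type*} [CommSemiring R]

lemma IsHomogeneous.degree_eq_of_mem_support {p : MvPolynomial σ R} {n : ℕ}
    (hp : p.IsHomogeneous n) {s : σ →₀ ℕ} (hs : s ∈ p.support) : s.degree = n :=
  (Finsupp.degree_apply s).trans (hp.degree_eq_sum_deg_support hs).symm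

lemma IsHomogeneous.coeff_mul_of_degree_le {p : MvPolynomial σ R} {N : ℕ}
    (hp : p.IsHomogeneous N) (a : MvPolynomial σ R) {s : σ →₀ ℕ} (hs : s.degree ≤ N) :
    coeff s (a * p) = coeff 0 a * coeff s p := by
  classical
  rw [coeff_mul, Finset.sum_eq_single (0, s)]
  · rintro ⟨x, y⟩ hxy hne
    simp only [Finset.HasAntidiagonal.mem_antidiagonal] at hxy ⊢
    have hx : x.degree ≠ 0 := by
      rw [Ne, Finsupp.degree_eq_zero_iff]
      rintro rfl
      simp_all
    have hy : y.degree ≠ N := by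
      rw [← hxy, map_add] at hs
      omega
    rw [hp.coeff_eq_zero hy, mul_zero]
  · simp

lemma le_degree_of_mem_ideal_span {S : Set (MvPolynomial σ R)} {n : ℕ}
    (hS : ∀ p ∈ S, p.IsHomogeneous n) {f : MvPolynomial σ R} (hf : f ∈ Ideal.span S)
    {s : σ →₀ ℕ} (hs : s ∈ f.support) : n ≤ s.degree := by
  have hle : Ideal.span S ≤ Ideal.span ((fun s => monomial s (1 : R)) '' {s | s.degree = n}) := by
    refine Ideal.span_le.mpr fun p hp => ?_
    rw [SetLike.mem_coe, p.as_sum]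
    refine Ideal.sum_mem _ fun v hv => ?_
    rw [← mul_one (coeff v p), ← C_mul_monomial]
    exact Ideal.mul_mem_left _ _ <|
      Ideal.subset_span ⟨v, (hS p hp).degree_eq_of_mem_support hv, rfl⟩
  obtain ⟨t, ht, hts⟩ := mem_ideal_span_monomial_image.mp (hle hf) s hs
  exact ht ▸ Finsupp.degree_mono hts

lemma mem_span_of_mem_ideal_span {V : Set (MvPolynomial σ R)} {N n : ℕ}
    (hV : ∀ v ∈ V, v.IsHomogeneous N) {g : MvPolynomial σ R} (hg : g.IsHomogeneous n)
    (hnN : n ≤ N) (hgV : g ∈ Ideal.span V) : g ∈ Submodule.span R V := by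
  obtain ⟨r, a, v, hsum⟩ := Submodule.mem_span_set'.mp hgV
  have hv : ∀ i, (v i : MvPolynomial σ R).IsHomogeneous N := fun i => hV _ (v i).2
  suffices g = ∑ i, coeff 0 (a i) • (v i : MvPolynomial σ R) by
    rw [this]
    exact Submodule.sum_mem _ fun i _ => Submodule.smul_mem _ _ (Submodule.subset_span (v i).2)
  ext s
  simp only [coeff_sum, coeff_smul, smul_eq_mul]
  by_cases hs : s.degree ≤ N
  · simp only [← hsum, coeff_sum, smul_eq_mul, (hv _).coeff_mul_of_degree_le _ hs]
  · rw [hg.coeff_eq_zero (by omega)]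
    exact (Finset.sum_eq_zero fun i _ => by rw [(hv i).coeff_eq_zero (by omega), mul_zero]).symm

end MvPolynomial

section SymmetricGroup

variable {k : Type*} [CommSemiring k] {d : ℕ}

lemma orderType_mapDomain (σ : Equiv.Perm (Fin d)) (s : Fin d →₀ ℕ) :
    orderType (s.mapDomain σ) = orderType s := by
  unfold orderType
  conv_lhs => rw [← Multiset.map_univ_val_equiv σ, Multiset.map_map]
  congr 1
  ext i
  exact Finsupp.mapDomain_apply σ.injective s i

lemma mem_psi_self (f : MvPolynomial (Fin d) k) : f ∈ psi f :=
  Ideal.subset_span ⟨1, by simp⟩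

lemma isHomogeneous_of_mem_symOrbit {N : ℕ} {f : MvPolynomial (Fin d) k}
    (hf : f.IsHomogeneous N) : ∀ v ∈ symOrbit f, v.IsHomogeneous N := by
  rintro _ ⟨σ, rfl⟩
  exact hf.rename_isHomogeneous

variable (k d) in
noncomputable def orderTypeContent : MvPolynomial (Fin d) k →ₗ[k] Multiset ℕ →₀ k :=
  Finsupp.lmapDomain k k orderType ∘ₗ (AddMonoidAlgebra.coeffLinearEquiv k).toLinearMap

@[simp]
lemma orderTypeContent_monomial (s : Fin d →₀ ℕ) (c : k) :
    orderTypeContent k d (monomial s c) = Finsupp.single (orderType s) c := by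
  simp [orderTypeContent, ← single_eq_monomial]

lemma orderTypeContent_rename (σ : Equiv.Perm (Fin d)) (p : MvPolynomial (Fin d) k) :
    orderTypeContent k d (rename σ p) = orderTypeContent k d p := by
  induction p using MvPolynomial.induction_on' with
  | monomial s c => simp [rename_monomial, orderType_mapDomain]
  | add p q hp hq => simp [hp, hq]

lemma eval_one_eq_sum_orderTypeContent (p : MvPolynomial (Fin d) k) :
    eval (fun _ => 1) p = (orderTypeContent k d p).sum fun _ c => c := by
  induction p using MvPolynomial.induction_on' with
  | monomial s c => simp [eval_monomial]
  | add p q hp hq => simp [hp, hq, Finsupp.sum_add_index]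

lemma orderTypeContent_ne_zero {p : MvPolynomial (Fin d) k} (hp : eval (fun _ => 1) p ≠ 0) :
    orderTypeContent k d p ≠ 0 := by
  intro h
  rw [eval_one_eq_sum_orderTypeContent, h, Finsupp.sum_zero_index] at hp
  exact hp rfl

lemma exists_mem_support_orderType_eq {p : MvPolynomial (Fin d) k} {μ : Multiset ℕ}
    (hμ : μ ∈ (orderTypeContent k d p).support) : ∃ s ∈ p.support, orderType s = μ := by
  classical
  obtain ⟨s, hs, rfl⟩ := Finset.mem_image.mp (Finsupp.mapDomain_support hμ)
  exact ⟨s, hs, rfl⟩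

lemma sharesOrderType_of_mem_support {g₁ g₂ : MvPolynomial (Fin d) k} {μ : Multiset ℕ}
    (h₁ : μ ∈ (orderTypeContent k d g₁).support) (h₂ : μ ∈ (orderTypeContent k d g₂).support) :
    sharesOrderType g₁ g₂ := by
  obtain ⟨s₁, hs₁, rfl⟩ := exists_mem_support_orderType_eq h₁
  obtain ⟨s₂, hs₂, hs⟩ := exists_mem_support_orderType_eq h₂
  exact ⟨s₁, hs₁, s₂, hs₂, hs.symm⟩

lemma exists_orderTypeContent_eq_smul {f g : MvPolynomial (Fin d) k}
    (hg : g ∈ Submodule.span k (symOrbit f)) :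
    ∃ t : k, t • orderTypeContent k d f = orderTypeContent k d g := by
  have := Submodule.apply_mem_span_image_of_mem_span (orderTypeContent k d) hg
  rw [symOrbit, ← Set.range_comp] at this
  simpa [Function.comp_def, orderTypeContent_rename, Submodule.mem_span_singleton] using this

end SymmetricGroup

theorem negative_order_type_analysis {k : Type*} [Field k] {d n : ℕ}
    (I : Ideal (MvPolynomial (Fin d) k))
    (S : Set (MvPolynomial (Fin d) k)) (hS : ∀ p ∈ S, p.IsHomogeneous n)
    (hI : I = Ideal.span S)
    (g₁ g₂ : MvPolynomial (Fin d) k)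
    (hg₁I : g₁ ∈ I) (hg₂I : g₂ ∈ I)
    (hg₁hom : g₁.IsHomogeneous n) (hg₂hom : g₂.IsHomogeneous n)
    (hdisj : ¬ sharesOrderType g₁ g₂)
    (hg₁1 : eval (fun _ => (1 : k)) g₁ ≠ 0)
    (hg₂1 : eval (fun _ => (1 : k)) g₂ ≠ 0) :
    ¬ ∃ (f : MvPolynomial (Fin d) k) (m : ℕ), f.IsHomogeneous m ∧ I = psi f := by
  rintro ⟨f, m, hf, rfl⟩
  obtain ⟨N, hnN, hfN⟩ : ∃ N, n ≤ N ∧ f.IsHomogeneous N := by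
    rcases eq_or_ne f 0 with rfl | hf0
    · exact ⟨n, le_rfl, isHomogeneous_zero _ _ _⟩
    obtain ⟨s, hs⟩ := support_nonempty.mpr hf0
    refine ⟨m, ?_, hf⟩
    exact hf.degree_eq_of_mem_support hs ▸ le_degree_of_mem_ideal_span hS (hI ▸ mem_psi_self f) hs
  obtain ⟨t₁, ht₁⟩ := exists_orderTypeContent_eq_smul
    (mem_span_of_mem_ideal_span (isHomogeneous_of_mem_symOrbit hfN) hg₁hom hnN hg₁I)
  obtain ⟨t₂, ht₂⟩ := exists_orderTypeContent_eq_smul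
    (mem_span_of_mem_ideal_span (isHomogeneous_of_mem_symOrbit hfN) hg₂hom hnN hg₂I)
  have hne₁ := orderTypeContent_ne_zero hg₁1
  have hne₂ := orderTypeContent_ne_zero hg₂1
  have ht₁0 : t₁ ≠ 0 := by rintro rfl; simp_all
  have ht₂0 : t₂ ≠ 0 := by rintro rfl; simp_all
  obtain ⟨μ, hμ⟩ := Finsupp.support_nonempty_iff.mpr hne₁
  refine hdisj (sharesOrderType_of_mem_support hμ ?_)
  rwa [← ht₂, Finsupp.support_smul_eq ht₂0, ← Finsupp.support_smul_eq ht₁0, ht₁]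
end

section
/- Suppose (f)_{S_d} is a monomial ideal. If f contains a term whose monomial has order type a, then every monomial of order type a lies in (f)_{S_d}, i.e., R_a ⊆ (f)_{S_d}. If moreover f is strongly homogeneous, then (f)_{S_d} equals the ideal (R_a). -/
/-!
Permuting the variables of a monomial `x^m` produces exactly the monomials whose exponent
vectors are rearrangements of `m`, i.e. those with the order type of `m`. A monomial ideal
contains every monomial occurring in each of its elements, so `x^m ∈ (f)_{S_d}` as soon as
`m ∈ supp f`, and then the `S_d`-stability of `(f)_{S_d}` gives all of `R_a`. Conversely,
when `f` is strongly homogeneous, every `σ f` is a linear combination of monomials of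
type `a`.
-/

open MvPolynomial

/-- An ideal of a multivariate polynomial ring is a monomial ideal if it is generated by
monomials. -/
def IsMonomialIdeal {k : Type*} [CommSemiring k] {d : ℕ}
    (I : Ideal (MvPolynomial (Fin d) k)) : Prop :=
  ∃ T : Set (Fin d →₀ ℕ), I = Ideal.span ((fun s => (monomial s (1 : k))) '' T)

section OrderType

variable {d : ℕ}

lemma orderType_equivMapDomain (σ : Equiv.Perm (Fin d)) (m : Fin d →₀ ℕ) :
    orderType (Finsupp.equivMapDomain σ m) = orderType m := by
  have hcomp : ⇑(Finsupp.equivMapDomain σ m) = ⇑m ∘ σ.symm := by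
    ext i
    rfl
  rw [orderType, orderType, hcomp, ← Multiset.map_map, Multiset.map_univ_val_equiv]

lemma orderType_eq_ofFn (s : Fin d →₀ ℕ) : orderType s = ↑(List.ofFn ⇑s) := by
  rw [orderType, ← Fin.univ_val_map]

/-- Sorting both exponent vectors increasingly identifies them, so `s = m ∘ sort m ∘ (sort s)⁻¹`. -/
lemma exists_equivMapDomain_eq_of_orderType_eq {s m : Fin d →₀ ℕ}
    (h : orderType s = orderType m) :
    ∃ σ : Equiv.Perm (Fin d), Finsupp.equivMapDomain σ m = s := by
  rw [orderType_eq_ofFn, orderType_eq_ofFn, Multiset.coe_eq_coe] at h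
  have hperm : (List.ofFn (⇑s ∘ Tuple.sort s)).Perm (List.ofFn (⇑m ∘ Tuple.sort m)) :=
    ((Tuple.sort s).ofFn_comp_perm s).trans (h.trans ((Tuple.sort m).ofFn_comp_perm m).symm)
  have hsorted : ⇑s ∘ Tuple.sort s = ⇑m ∘ Tuple.sort m :=
    List.ofFn_injective <| hperm.eq_of_sortedLE
      (Tuple.monotone_sort _).sortedLE_ofFn (Tuple.monotone_sort _).sortedLE_ofFn
  refine ⟨(Tuple.sort s).symm.trans (Tuple.sort m) |>.symm, ?_⟩
  ext i
  simpa using (congrFun hsorted ((Tuple.sort s).symm i)).symm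

end OrderType

section SymmetricIdeal

variable {k : Type*} [CommSemiring k] {d : ℕ}

lemma rename_mem_psi {f x : MvPolynomial (Fin d) k} (σ : Equiv.Perm (Fin d))
    (hx : x ∈ psi f) : rename σ x ∈ psi f := by
  have hmap : Ideal.map (rename σ) (psi f) ≤ psi f := by
    rw [psi, Ideal.map_span, Ideal.span_le]
    rintro y ⟨z, ⟨τ, rfl⟩, rfl⟩
    exact Ideal.subset_span ⟨σ * τ, by simp [rename_rename, Function.comp_def]⟩
  exact hmap (Ideal.mem_map_of_mem _ hx)

lemma monomial_mem_psi_of_orderType_eq {f : MvPolynomial (Fin d) k} {m s : Fin d →₀ ℕ}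
    (hm : monomial m 1 ∈ psi f) (hs : orderType s = orderType m) :
    monomial s 1 ∈ psi f := by
  obtain ⟨σ, rfl⟩ := exists_equivMapDomain_eq_of_orderType_eq hs
  rw [Finsupp.equivMapDomain_eq_mapDomain, ← rename_monomial]
  exact rename_mem_psi σ hm

lemma psi_le_span_monomials_of_orderType_eq {f : MvPolynomial (Fin d) k} {a : Multiset ℕ}
    (hf : ∀ m ∈ f.support, orderType m = a) :
    psi f ≤ Ideal.span {p | ∃ s : Fin d →₀ ℕ, orderType s = a ∧ p = monomial s 1} := by
  rw [psi, Ideal.span_le]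
  rintro _ ⟨σ, rfl⟩
  dsimp only
  rw [f.as_sum, map_sum]
  refine Ideal.sum_mem _ fun m hm => ?_
  rw [rename_monomial, ← mul_one (coeff m f), ← C_mul_monomial]
  refine Ideal.mul_mem_left _ _ (Ideal.subset_span ⟨_, ?_, rfl⟩)
  rw [← Finsupp.equivMapDomain_eq_mapDomain, orderType_equivMapDomain]
  exact hf m hm

end SymmetricIdeal

lemma IsMonomialIdeal.monomial_mem_of_mem_support {k : Type*} [CommSemiring k] {d : ℕ}
    {I : Ideal (MvPolynomial (Fin d) k)} (hI : IsMonomialIdeal I)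
    {p : MvPolynomial (Fin d) k} (hp : p ∈ I) {m : Fin d →₀ ℕ} (hm : m ∈ p.support) :
    monomial m 1 ∈ I := by
  obtain ⟨T, rfl⟩ := hI
  rw [mem_ideal_span_monomial_image] at hp ⊢
  intro m' hm'
  rw [Finset.mem_singleton.mp (support_monomial_subset hm')]
  exact hp m hm

theorem contains_all_monomials_of_an_order_type {k : Type*} [Field k] {d : ℕ}
    (f : MvPolynomial (Fin d) k) (hmono : IsMonomialIdeal (psi f))
    (m : Fin d →₀ ℕ) (hm : m ∈ f.support) :
    (∀ s : Fin d →₀ ℕ, orderType s = orderType m →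
        (monomial s (1 : k) : MvPolynomial (Fin d) k) ∈ psi f) ∧
      ((∀ m' ∈ f.support, orderType m' = orderType m) →
        psi f = Ideal.span {p : MvPolynomial (Fin d) k |
          ∃ s : Fin d →₀ ℕ, orderType s = orderType m ∧ p = monomial s 1}) := by
  have hf : f ∈ psi f := Ideal.subset_span ⟨1, rename_id_apply f⟩
  have hmonomial : monomial m 1 ∈ psi f := hmono.monomial_mem_of_mem_support hf hm
  have hR_a : ∀ s : Fin d →₀ ℕ, orderType s = orderType m → monomial s (1 : k) ∈ psi f :=
    fun s hs => monomial_mem_psi_of_orderType_eq hmonomial hs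
  refine ⟨hR_a, fun hhom => le_antisymm (psi_le_span_monomials_of_orderType_eq hhom) ?_⟩
  rw [Ideal.span_le]
  rintro _ ⟨s, hs, rfl⟩
  exact hR_a s hs
end
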